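/- As λ → ∞, the ℓ₁ trend filter estimate μ̂(λ) = argmin { (1/2)Σ_{t=1}^n (y_t − μ_t)² + λ Σ_{t=3}^n |μ_t + μ_{t−2} − 2μ_{t−1}| } converges to the best affine (linear-in-t) least-squares fit of y; in particular, if λ exceeds a finite threshold λ_max (depending on y), then μ̂(λ) is exactly the affine least-squares fit. -/

import Mathlib

/-!
Split a minimizer `μ̂` as `p + w`, with `p` its least-squares affine fit and `w ⊥` affine functions.
The penalty only sees `w`, and comparing the objective at `μ̂` with its value at `p` gives
`λ · P(w) ≤ ⟨y, w⟩ ≤ ‖y‖ ‖w‖`, where `P` is the ℓ₁ norm of second differences. On the orthogonal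
complement of the affine functions `P` is a norm, and telescoping twice makes this quantitative:
`‖w‖ ≤ n^{3/2} P(w)`. So `P(w) = 0` as soon as `λ > n^{3/2} ‖y‖`; then `μ̂` is affine, and minimality
against every affine competitor makes it the least-squares affine fit.
-/

/-- The ℓ₁ trend filtering objective (0-indexed: data `y 0, …, y (n-1)`;
the penalty runs over second differences `μ t + μ (t-2) - 2 μ (t-1)` for
`2 ≤ t ≤ n-1`, corresponding to `t = 3,…,n` in 1-indexed notation). -/
noncomputable def tfObj (n : ℕ) (y : ℕ → ℝ) (lam : ℝ) (μ : ℕ → ℝ) : ℝ :=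
  (1 / 2) * ∑ t ∈ Finset.range n, (y t - μ t) ^ 2 +
    lam * ∑ t ∈ Finset.Ico 2 n, |μ t + μ (t - 2) - 2 * μ (t - 1)|

open Finset

namespace TrendFilter

noncomputable def secondDiffL1 (n : ℕ) (μ : ℕ → ℝ) : ℝ :=
  ∑ t ∈ Ico 2 n, |μ t + μ (t - 2) - 2 * μ (t - 1)|

def OrthogonalToAffine (n : ℕ) (w : ℕ → ℝ) : Prop :=
  ∑ t ∈ range n, w t = 0 ∧ ∑ t ∈ range n, (t : ℝ) * w t = 0

variable {n : ℕ}

theorem tfObj_eq (y : ℕ → ℝ) (lam : ℝ) (μ : ℕ → ℝ) :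
    tfObj n y lam μ = (1 / 2) * ∑ t ∈ range n, (y t - μ t) ^ 2 + lam * secondDiffL1 n μ :=
  rfl

theorem secondDiffL1_nonneg (μ : ℕ → ℝ) : 0 ≤ secondDiffL1 n μ :=
  sum_nonneg fun _ _ => abs_nonneg _

theorem secondDiffL1_eq_sum_range (μ : ℕ → ℝ) :
    secondDiffL1 n μ = ∑ s ∈ range (n - 2), |μ (s + 2) + μ s - 2 * μ (s + 1)| := by
  rw [secondDiffL1, sum_Ico_eq_sum_range]
  refine sum_congr rfl fun s _ => ?_
  rw [show 2 + s - 2 = s by omega, show 2 + s - 1 = s + 1 by omega, add_comm 2 s]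

theorem secondDiff_affine (a b : ℝ) {s : ℕ} (hs : 2 ≤ s) :
    (a + b * s) + (a + b * ((s - 2 : ℕ) : ℝ)) - 2 * (a + b * ((s - 1 : ℕ) : ℝ)) = 0 := by
  rw [Nat.cast_sub hs, Nat.cast_sub (by omega : 1 ≤ s)]
  push_cast
  ring

theorem secondDiffL1_affine (a b : ℝ) : secondDiffL1 n (fun t => a + b * t) = 0 :=
  sum_eq_zero fun s hs => by
    rw [secondDiff_affine a b (mem_Ico.mp hs).1, abs_zero]

theorem secondDiffL1_sub_affine (μ : ℕ → ℝ) (a b : ℝ) :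
    secondDiffL1 n (fun t => μ t - (a + b * t)) = secondDiffL1 n μ := by
  refine sum_congr rfl fun s hs => ?_
  have h := secondDiff_affine a b (mem_Ico.mp hs).1
  congr 1
  linear_combination -h

theorem firstDiff_sub_firstDiff_zero (w : ℕ → ℝ) (u : ℕ) :
    (w (u + 1) - w u) - (w 1 - w 0) = ∑ s ∈ range u, (w (s + 2) + w s - 2 * w (s + 1)) := by
  rw [← sum_range_sub (fun s => w (s + 1) - w s)]
  exact sum_congr rfl fun s _ => by ring

theorem abs_firstDiff_sub_firstDiff_zero_le (w : ℕ → ℝ) {u : ℕ} (hu : u + 2 ≤ n) :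
    |(w (u + 1) - w u) - (w 1 - w 0)| ≤ secondDiffL1 n w := by
  rw [firstDiff_sub_firstDiff_zero, secondDiffL1_eq_sum_range]
  calc |∑ s ∈ range u, (w (s + 2) + w s - 2 * w (s + 1))|
      ≤ ∑ s ∈ range u, |w (s + 2) + w s - 2 * w (s + 1)| := abs_sum_le_sum_abs _ _
    _ ≤ _ := sum_le_sum_of_subset_of_nonneg (range_subset_range.mpr (by omega))
        fun _ _ _ => abs_nonneg _

theorem abs_sub_linearInterp_le (w : ℕ → ℝ) {t : ℕ} (ht : t < n) :
    |w t - (w 0 + (w 1 - w 0) * t)| ≤ t * secondDiffL1 n w := by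
  have htel :
      w t - (w 0 + (w 1 - w 0) * t) = ∑ u ∈ range t, ((w (u + 1) - w u) - (w 1 - w 0)) := by
    rw [sum_sub_distrib, sum_range_sub, sum_const, card_range, nsmul_eq_mul]
    ring
  calc |w t - (w 0 + (w 1 - w 0) * t)|
      ≤ ∑ u ∈ range t, |(w (u + 1) - w u) - (w 1 - w 0)| := htel ▸ abs_sum_le_sum_abs _ _
    _ ≤ ∑ _u ∈ range t, secondDiffL1 n w :=
        sum_le_sum fun u hu => abs_firstDiff_sub_firstDiff_zero_le w (by rw [mem_range] at hu; omega)
    _ = t * secondDiffL1 n w := by rw [sum_const, card_range, nsmul_eq_mul]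

theorem eq_linearInterp_of_secondDiffL1_eq_zero {μ : ℕ → ℝ} (h : secondDiffL1 n μ = 0)
    {t : ℕ} (ht : t < n) : μ t = μ 0 + (μ 1 - μ 0) * t := by
  have := abs_sub_linearInterp_le μ ht
  rw [h, mul_zero] at this
  linarith [abs_nonpos_iff.mp this]

theorem sum_range_cast (n : ℕ) : ∑ t ∈ range n, (t : ℝ) = n * (n - 1) / 2 := by
  induction n with
  | zero => simp
  | succ k ih => rw [sum_range_succ, ih]; push_cast; ring

theorem sum_range_cast_sq (n : ℕ) :
    ∑ t ∈ range n, (t : ℝ) ^ 2 = n * (n - 1) * (2 * n - 1) / 6 := by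
  induction n with
  | zero => simp
  | succ k ih => rw [sum_range_succ, ih]; push_cast; ring

theorem gram_det_pos (hn : 2 ≤ n) :
    0 < n * ∑ t ∈ range n, (t : ℝ) ^ 2 - (∑ t ∈ range n, (t : ℝ)) ^ 2 := by
  have hn' : (2 : ℝ) ≤ n := by exact_mod_cast hn
  rw [sum_range_cast, sum_range_cast_sq]
  nlinarith [mul_pos (mul_pos (by linarith : (0 : ℝ) < n) (by linarith : (0 : ℝ) < n))
    (mul_pos (by linarith : (0 : ℝ) < n - 1) (by linarith : (0 : ℝ) < n + 1))]

/-- The normal equations of least-squares affine regression, solved by Cramer's rule. -/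
theorem exists_orthogonalToAffine_sub (hn : 2 ≤ n) (μ : ℕ → ℝ) :
    ∃ a b : ℝ, OrthogonalToAffine n fun t => μ t - (a + b * t) := by
  set T1 := ∑ t ∈ range n, (t : ℝ)
  set T2 := ∑ t ∈ range n, (t : ℝ) ^ 2
  set M0 := ∑ t ∈ range n, μ t
  set M1 := ∑ t ∈ range n, (t : ℝ) * μ t
  set D := n * T2 - T1 ^ 2
  have hD : D ≠ 0 := (gram_det_pos hn).ne'
  refine ⟨(T2 * M0 - T1 * M1) / D, (n * M1 - T1 * M0) / D, ?_, ?_⟩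
  · rw [sum_sub_distrib, sum_add_distrib, sum_const, card_range, nsmul_eq_mul, ← mul_sum,
      sub_eq_zero]
    field_simp
    ring
  · simp only [show ∀ (a b : ℝ) (t : ℕ), (t : ℝ) * (μ t - (a + b * t)) =
        t * μ t - (a * t + b * t ^ 2) from fun _ _ _ => by ring,
      sum_sub_distrib, sum_add_distrib, ← mul_sum, sub_eq_zero]
    field_simp
    ring

theorem OrthogonalToAffine.sum_mul_affine {w : ℕ → ℝ} (hw : OrthogonalToAffine n w)
    (c d : ℝ) : ∑ t ∈ range n, w t * (c + d * t) = 0 := by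
  simp only [show ∀ t : ℕ, w t * (c + d * t) = c * w t + d * (t * w t) from fun t => by ring,
    sum_add_distrib, ← mul_sum, hw.1, hw.2, mul_zero, add_zero]

/-- Pairing `w` with its own linear interpolant costs nothing, so `‖w‖²` is bounded by
`‖w‖₁ · n P(w) ≤ √n ‖w‖ · n P(w)`. -/
theorem OrthogonalToAffine.sum_sq_le {w : ℕ → ℝ} (hw : OrthogonalToAffine n w) :
    ∑ t ∈ range n, w t ^ 2 ≤ n ^ 3 * secondDiffL1 n w ^ 2 := by
  set S := ∑ t ∈ range n, w t ^ 2
  set P := secondDiffL1 n w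
  set A := ∑ t ∈ range n, |w t|
  have hP : 0 ≤ P := secondDiffL1_nonneg w
  have hS : 0 ≤ S := sum_nonneg fun _ _ => sq_nonneg _
  have hSA : S ≤ A * (n * P) := by
    have hS' : S = ∑ t ∈ range n, w t * (w t - (w 0 + (w 1 - w 0) * t)) := by
      simp only [mul_sub, sum_sub_distrib, hw.sum_mul_affine, sub_zero, S, sq]
    rw [hS', sum_mul]
    refine sum_le_sum fun t ht => ?_
    have ht := mem_range.mp ht
    calc w t * (w t - (w 0 + (w 1 - w 0) * t))
        ≤ |w t| * |w t - (w 0 + (w 1 - w 0) * t)| := (le_abs_self _).trans (abs_mul _ _).le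
      _ ≤ |w t| * (n * P) := by
          gcongr
          exact (abs_sub_linearInterp_le w ht).trans
            (mul_le_mul_of_nonneg_right (by exact_mod_cast ht.le) hP)
  have hAS : A ^ 2 ≤ n * S := by
    simpa [A, S, sq_abs] using sq_sum_le_card_mul_sum_sq (s := range n) (f := fun t => |w t|)
  have hS2 : S * S ≤ n ^ 3 * P ^ 2 * S :=
    calc S * S ≤ (A * (n * P)) ^ 2 := by nlinarith
      _ = A ^ 2 * (n ^ 2 * P ^ 2) := by ring
      _ ≤ n * S * (n ^ 2 * P ^ 2) := by gcongr
      _ = n ^ 3 * P ^ 2 * S := by ring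
  rcases hS.eq_or_lt with h | h
  · rw [← h]; positivity
  · exact le_of_mul_le_mul_right hS2 h

theorem sum_sq_sub_eq_of_orthogonalToAffine (y μ : ℕ → ℝ) {a b : ℝ}
    (h : OrthogonalToAffine n fun t => μ t - (a + b * t)) :
    ∑ t ∈ range n, (y t - μ t) ^ 2 =
      ∑ t ∈ range n, (y t - (a + b * t)) ^ 2 - 2 * ∑ t ∈ range n, y t * (μ t - (a + b * t)) +
        ∑ t ∈ range n, (μ t - (a + b * t)) ^ 2 := by
  calc ∑ t ∈ range n, (y t - μ t) ^ 2
      = ∑ t ∈ range n, ((y t - (a + b * t)) ^ 2 - 2 * (y t * (μ t - (a + b * t))) +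
          (μ t - (a + b * t)) ^ 2 + 2 * ((μ t - (a + b * t)) * (a + b * t))) :=
        sum_congr rfl fun t _ => by ring
    _ = _ := by
        simp only [sum_add_distrib, sum_sub_distrib, ← mul_sum, h.sum_mul_affine, mul_zero,
          add_zero]

theorem secondDiffL1_eq_zero_of_isMinimizer (hn : 2 ≤ n) {y μh : ℕ → ℝ} {lam : ℝ}
    (hlam : √(n ^ 3 * ∑ t ∈ range n, y t ^ 2) < lam)
    (hmin : ∀ μ : ℕ → ℝ, tfObj n y lam μh ≤ tfObj n y lam μ) :
    secondDiffL1 n μh = 0 := by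
  obtain ⟨a, b, hw⟩ := exists_orthogonalToAffine_sub hn μh
  set w : ℕ → ℝ := fun t => μh t - (a + b * t)
  set P := secondDiffL1 n μh
  set I := ∑ t ∈ range n, y t * w t
  set Y := ∑ t ∈ range n, y t ^ 2
  have hP : 0 ≤ P := secondDiffL1_nonneg μh
  have hlam0 : 0 ≤ lam := (Real.sqrt_nonneg _).trans hlam.le
  have hPI : lam * P ≤ I := by
    have hcmp := hmin fun t => a + b * t
    rw [tfObj_eq, tfObj_eq, secondDiffL1_affine, sum_sq_sub_eq_of_orthogonalToAffine y μh hw]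
      at hcmp
    nlinarith [sum_nonneg fun t (_ : t ∈ range n) => sq_nonneg (w t)]
  have hIY : I ^ 2 ≤ Y * (n ^ 3 * P ^ 2) :=
    calc I ^ 2 ≤ Y * ∑ t ∈ range n, w t ^ 2 := sum_mul_sq_le_sq_mul_sq _ _ _
      _ ≤ Y * (n ^ 3 * P ^ 2) := by
          gcongr
          simpa only [w, secondDiffL1_sub_affine] using hw.sum_sq_le
  have hlam2 : n ^ 3 * Y < lam ^ 2 :=
    (Real.sqrt_lt' ((Real.sqrt_nonneg _).trans_lt hlam)).mp hlam
  by_contra hP0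
  have hPpos : 0 < P ^ 2 := by positivity
  have hlamP : lam ^ 2 * P ^ 2 ≤ n ^ 3 * Y * P ^ 2 :=
    calc lam ^ 2 * P ^ 2 = (lam * P) ^ 2 := by ring
      _ ≤ I ^ 2 := pow_le_pow_left₀ (mul_nonneg hlam0 hP) hPI 2
      _ ≤ n ^ 3 * Y * P ^ 2 := by linarith
  exact hlam2.not_ge (le_of_mul_le_mul_right hlamP hPpos)

theorem sum_sq_le_of_isMinimizer_of_secondDiffL1_eq_zero {y μh : ℕ → ℝ} {lam : ℝ}
    (hmin : ∀ μ : ℕ → ℝ, tfObj n y lam μh ≤ tfObj n y lam μ) (hP : secondDiffL1 n μh = 0)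
    (a b : ℝ) :
    ∑ t ∈ range n, (y t - μh t) ^ 2 ≤ ∑ t ∈ range n, (y t - (a + b * t)) ^ 2 := by
  have h := hmin fun t => a + b * t
  rw [tfObj_eq, tfObj_eq, hP, secondDiffL1_affine] at h
  linarith

end TrendFilter

open TrendFilter in
/-- As `λ → ∞` the ℓ₁ trend filter converges to the best
affine fit: there is a finite threshold `λ_max` (depending on `y`) such that
for any `λ > λ_max`, any minimizer `μ̂` of the objective is affine in `t`
on `{0,…,n-1}` and is a least-squares affine fit of `y`. -/
theorem trend_filter_large_lambda_affine_fit
    (n : ℕ) (hn : 3 ≤ n) (y : ℕ → ℝ) :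
    ∃ lamMax : ℝ, ∀ lam : ℝ, lamMax < lam →
      ∀ μh : ℕ → ℝ, (∀ μ : ℕ → ℝ, tfObj n y lam μh ≤ tfObj n y lam μ) →
        ∃ a b : ℝ, (∀ t < n, μh t = a + b * t) ∧
          ∀ a' b' : ℝ,
            ∑ t ∈ Finset.range n, (y t - (a + b * t)) ^ 2 ≤
              ∑ t ∈ Finset.range n, (y t - (a' + b' * t)) ^ 2 := by
  refine ⟨√(n ^ 3 * ∑ t ∈ range n, y t ^ 2), fun lam hlam μh hmin => ?_⟩
  have hP := secondDiffL1_eq_zero_of_isMinimizer (by omega) hlam hmin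
  have hlin : ∀ t < n, μh t = μh 0 + (μh 1 - μh 0) * t :=
    fun t ht => eq_linearInterp_of_secondDiffL1_eq_zero hP ht
  refine ⟨μh 0, μh 1 - μh 0, hlin, fun a' b' => ?_⟩
  calc ∑ t ∈ range n, (y t - (μh 0 + (μh 1 - μh 0) * t)) ^ 2
      = ∑ t ∈ range n, (y t - μh t) ^ 2 :=
        sum_congr rfl fun t ht => by rw [hlin t (mem_range.mp ht)]
    _ ≤ _ := sum_sq_le_of_isMinimizer_of_secondDiffL1_eq_zero hmin hP a' b'
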